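/- Let a, b, r, C₂ ∈ ℂ with a ≠ 0 and a ≠ b. Set Ī(t) = C₂·e^{-a·t} and X̄(t) = exp((r·C₂/a)·e^{-a·t}). Define δS(t) = 0, δE(t) = e^{-b·t}, δI(t) = (b/(a−b))·(e^{-b·t} − e^{-a·t}), δX(t) = (r/a)·((a/(a−b))·e^{-b·t} − (b/(a−b))·e^{-a·t} − 1)·X̄(t), δY(t) = (r/a)·(e^{-b·t} − 1), δZ(t) = 0. Then (δS, δE, δI, δX, δY, δZ) is a solution of the variational equation δS' = -r·Ī(t)·δS, δE' = r·Ī(t)·δS - b·δE, δI' = b·δE - a·δI, δX' = -r·X̄(t)·δI - r·Ī(t)·δX, δY' = -(r·b/a)·δE, δZ' = -(r²/a)·Ī(t)·δS on ℝ, with initial value (0, 1, 0, 0, 0, 0) at t = 0. -/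

import Mathlib

/-- `Ī(t) = C₂·e^{-a t}`. -/
noncomputable def Ibar (a C₂ : ℂ) (t : ℝ) : ℂ := C₂ * Complex.exp (-a * t)

/-- `X̄(t) = exp((r C₂ / a)·e^{-a t})`. -/
noncomputable def Xbar (a r C₂ : ℂ) (t : ℝ) : ℂ :=
  Complex.exp (r * C₂ / a * Complex.exp (-a * t))

/-- `δE(t) = e^{-b t}`. -/
noncomputable def dE (b : ℂ) (t : ℝ) : ℂ := Complex.exp (-b * t)

/-- `δI(t) = (b/(a−b))(e^{-b t} − e^{-a t})`. -/
noncomputable def dI (a b : ℂ) (t : ℝ) : ℂ :=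
  b / (a - b) * (Complex.exp (-b * t) - Complex.exp (-a * t))

/-- `δX(t) = (r/a)((a/(a−b))e^{-b t} − (b/(a−b))e^{-a t} − 1) X̄(t)`. -/
noncomputable def dX (a b r C₂ : ℂ) (t : ℝ) : ℂ :=
  r / a * (a / (a - b) * Complex.exp (-b * t) - b / (a - b) * Complex.exp (-a * t) - 1) *
    Xbar a r C₂ t

/-- `δY(t) = (r/a)(e^{-b t} − 1)`. -/
noncomputable def dY (a b r : ℂ) (t : ℝ) : ℂ := r / a * (Complex.exp (-b * t) - 1)

open Complex

section VariationalSolution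

variable {a b r C₂ : ℂ}

lemma hasDerivAt_cexp_mul_ofReal (c : ℂ) (t : ℝ) :
    HasDerivAt (fun s : ℝ => cexp (c * s)) (c * cexp (c * t)) t := by
  simpa [mul_comm] using ((hasDerivAt_id (t : ℂ)).const_mul c).cexp.comp_ofReal

lemma hasDerivAt_Xbar (ha : a ≠ 0) (t : ℝ) :
    HasDerivAt (Xbar a r C₂) (-r * Ibar a C₂ t * Xbar a r C₂ t) t :=
  ((hasDerivAt_cexp_mul_ofReal (-a) t).const_mul (r * C₂ / a)).cexp.congr_deriv <| by
    simp only [Ibar, Xbar]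
    field_simp

lemma hasDerivAt_dE (t : ℝ) : HasDerivAt (dE b) (-b * dE b t) t :=
  hasDerivAt_cexp_mul_ofReal (-b) t

lemma hasDerivAt_dI (hab : a ≠ b) (t : ℝ) :
    HasDerivAt (dI a b) (b * dE b t - a * dI a b t) t :=
  (((hasDerivAt_cexp_mul_ofReal (-b) t).sub (hasDerivAt_cexp_mul_ofReal (-a) t)).const_mul
    (b / (a - b))).congr_deriv <| by
    simp only [dE, dI]
    field_simp [sub_ne_zero_of_ne hab]
    ring

/-- With `X̄' = -r Ī X̄`, the product rule turns this into the equation for `δX`. -/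
lemma hasDerivAt_dX_factor (ha : a ≠ 0) (t : ℝ) :
    HasDerivAt (fun s : ℝ =>
        r / a * (a / (a - b) * cexp (-b * s) - b / (a - b) * cexp (-a * s) - 1))
      (-r * dI a b t) t :=
  (((((hasDerivAt_cexp_mul_ofReal (-b) t).const_mul (a / (a - b))).sub
    ((hasDerivAt_cexp_mul_ofReal (-a) t).const_mul (b / (a - b)))).sub_const 1).const_mul
    (r / a)).congr_deriv <| by
    simp only [dI]
    field_simp
    ring

lemma hasDerivAt_dX (ha : a ≠ 0) (t : ℝ) :
    HasDerivAt (dX a b r C₂)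
      (-r * Xbar a r C₂ t * dI a b t - r * Ibar a C₂ t * dX a b r C₂ t) t :=
  ((hasDerivAt_dX_factor ha t).mul (hasDerivAt_Xbar ha t)).congr_deriv <| by
    simp only [dX]
    ring

lemma hasDerivAt_dY (t : ℝ) : HasDerivAt (dY a b r) (-(r * b / a) * dE b t) t :=
  (((hasDerivAt_cexp_mul_ofReal (-b) t).sub_const 1).const_mul (r / a)).congr_deriv <| by
    simp only [dE]
    ring

lemma dX_zero (hab : a ≠ b) : dX a b r C₂ 0 = 0 := by
  have h : a / (a - b) - b / (a - b) - 1 = 0 := by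
    field_simp [sub_ne_zero_of_ne hab]
    ring
  simp [dX, h]

end VariationalSolution

/-- The second solution of the variational equation of the extended SEIR system
(case `a ≠ b`), with initial value `(0,1,0,0,0,0)`. -/
theorem variational_solution_two_a_ne_b (a b r C₂ : ℂ) (ha : a ≠ 0) (hab : a ≠ b) :
    (∀ t : ℝ,
      HasDerivAt (fun _ : ℝ => (0 : ℂ)) (-r * Ibar a C₂ t * 0) t ∧
      HasDerivAt (dE b) (r * Ibar a C₂ t * 0 - b * dE b t) t ∧
      HasDerivAt (dI a b) (b * dE b t - a * dI a b t) t ∧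
      HasDerivAt (dX a b r C₂)
        (-r * Xbar a r C₂ t * dI a b t - r * Ibar a C₂ t * dX a b r C₂ t) t ∧
      HasDerivAt (dY a b r) (-(r * b / a) * dE b t) t ∧
      HasDerivAt (fun _ : ℝ => (0 : ℂ)) (-(r ^ 2 / a) * Ibar a C₂ t * 0) t) ∧
    (0 : ℂ) = 0 ∧ dE b 0 = 1 ∧ dI a b 0 = 0 ∧ dX a b r C₂ 0 = 0 ∧ dY a b r 0 = 0 ∧
    (0 : ℂ) = 0 := by
  refine ⟨fun t => ⟨?_, ?_, hasDerivAt_dI hab t, hasDerivAt_dX ha t, hasDerivAt_dY t, ?_⟩,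
    rfl, by simp [dE], by simp [dI], dX_zero hab, by simp [dY], rfl⟩
  · simpa using hasDerivAt_const t (0 : ℂ)
  · simpa using hasDerivAt_dE t
  · simpa using hasDerivAt_const t (0 : ℂ)
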